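/- Deleting a defeasible rule with a defeasibly-unprovable body literal preserves consequences: Let D be a basic defeasible theory interpreted with separated reasoning, let r be a defeasible rule of D whose body contains the literal q, and suppose D ⊢ −∂q. Let D' be obtained from D by deleting the rule r. Then D ≡ D', i.e. D and D' have identical sets of consequences (including extended conclusions). -/
import Mathlib


/-- A propositional literal: an atom or its negation. -/
inductive Lit where
  | pos : ℕ → Lit
  | neg : ℕ → Lit
deriving DecidableEq

/-- The complement ~q of a literal q. -/
def Lit.compl : Lit → Lit
  | .pos n => .neg n
  | .neg n => .pos n

/-- The atom underlying a literal. -/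
def Lit.atom : Lit → ℕ
  | .pos n => n
  | .neg n => n

/-- The three kinds of rules: strict (→), defeasible (⇒), defeater (⇝). -/
inductive RuleKind where
  | strict | defeasible | defeater
deriving DecidableEq

/-- A rule: a finite body of literals, a head literal, and a kind. -/
structure Rule where
  body : Finset Lit
  head : Lit
  kind : RuleKind
deriving DecidableEq

/-- A propositional defeasible theory: finite facts, finite rules, and an
acyclic superiority relation on rules. -/
structure DTheory where
  facts : Finset Lit
  rules : Finset Rule
  sup : Rule → Rule → Prop
  sup_acyclic : ∀ r, ¬ Relation.TransGen sup r r

/-- Tagged literals (extended conclusions): tags ±Δ, ±∂, ±σ. -/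
inductive TaggedLit where
  | pDelta : Lit → TaggedLit
  | mDelta : Lit → TaggedLit
  | pPartial : Lit → TaggedLit
  | mPartial : Lit → TaggedLit
  | pSigma : Lit → TaggedLit
  | mSigma : Lit → TaggedLit
deriving DecidableEq

/-- The literal of a tagged literal. -/
def TaggedLit.lit : TaggedLit → Lit
  | .pDelta q => q
  | .mDelta q => q
  | .pPartial q => q
  | .mPartial q => q
  | .pSigma q => q
  | .mSigma q => q

/-- Tagged literals whose tag is among +Δ, −Δ, +∂, −∂ (conclusions proper). -/
def TaggedLit.IsConclusionTag : TaggedLit → Prop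
  | .pDelta _ => True
  | .mDelta _ => True
  | .pPartial _ => True
  | .mPartial _ => True
  | .pSigma _ => False
  | .mSigma _ => False

/-- R_s[q]: strict rules with head q. -/
def DTheory.Rs (D : DTheory) (q : Lit) : Set Rule :=
  {r | r ∈ D.rules ∧ r.kind = RuleKind.strict ∧ r.head = q}

/-- R_sd[q]: strict and defeasible rules with head q. -/
def DTheory.Rsd (D : DTheory) (q : Lit) : Set Rule :=
  {r | r ∈ D.rules ∧ r.kind ≠ RuleKind.defeater ∧ r.head = q}

/-- R_d[q]: defeasible rules with head q. -/
def DTheory.Rd (D : DTheory) (q : Lit) : Set Rule :=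
  {r | r ∈ D.rules ∧ r.kind = RuleKind.defeasible ∧ r.head = q}

/-- R[q]: all rules with head q. -/
def DTheory.Rall (D : DTheory) (q : Lit) : Set Rule :=
  {r | r ∈ D.rules ∧ r.head = q}

/-- The rules used for defeasible provability (tags ±∂, ±σ): under separated
reasoning (`sep = true`) these are the defeasible rules R_d[q]; under the
standard interpretation (`sep = false`) they are R_sd[q]. -/
def DTheory.RD (D : DTheory) (sep : Bool) (q : Lit) : Set Rule :=
  if sep then D.Rd q else D.Rsd q

/-- `Step sep D S c` holds iff the tagged literal `c` may be appended to a
derivation in `D` whose set of preceding lines is `S`, by one of the inference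
rules (±Δ, ±∂, ±σ).  `sep` selects separated reasoning. -/
inductive Step (sep : Bool) (D : DTheory) (S : Set TaggedLit) : TaggedLit → Prop
  | plusDelta (q : Lit) :
      (q ∈ D.facts ∨ ∃ r ∈ D.Rs q, ∀ a ∈ r.body, TaggedLit.pDelta a ∈ S) →
      Step sep D S (TaggedLit.pDelta q)
  | minusDelta (q : Lit) :
      q ∉ D.facts →
      (∀ r ∈ D.Rs q, ∃ a ∈ r.body, TaggedLit.mDelta a ∈ S) →
      Step sep D S (TaggedLit.mDelta q)
  | plusPartial (q : Lit) :
      (TaggedLit.pDelta q ∈ S ∨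
        ((∃ r ∈ D.RD sep q, ∀ a ∈ r.body, TaggedLit.pPartial a ∈ S) ∧
         TaggedLit.mDelta q.compl ∈ S ∧
         (∀ s ∈ D.Rall q.compl,
            (∃ a ∈ s.body, TaggedLit.mPartial a ∈ S) ∨
            (∃ t ∈ D.RD sep q, D.sup t s ∧ ∀ a ∈ t.body, TaggedLit.pPartial a ∈ S)))) →
      Step sep D S (TaggedLit.pPartial q)
  | minusPartial (q : Lit) :
      TaggedLit.mDelta q ∈ S →
      ((∀ r ∈ D.RD sep q, ∃ a ∈ r.body, TaggedLit.mPartial a ∈ S) ∨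
       TaggedLit.pDelta q.compl ∈ S ∨
       (∃ s ∈ D.Rall q.compl,
          (∀ a ∈ s.body, TaggedLit.pPartial a ∈ S) ∧
          (∀ t ∈ D.RD sep q,
             (∃ a ∈ t.body, TaggedLit.mPartial a ∈ S) ∨ ¬ D.sup t s))) →
      Step sep D S (TaggedLit.mPartial q)
  | plusSigma (q : Lit) :
      (∃ r ∈ D.RD sep q, ∀ a ∈ r.body, TaggedLit.pPartial a ∈ S) →
      Step sep D S (TaggedLit.pSigma q)
  | minusSigma (q : Lit) :
      (∀ r ∈ D.RD sep q, ∃ a ∈ r.body, TaggedLit.mPartial a ∈ S) →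
      Step sep D S (TaggedLit.mSigma q)

/-- Derivations: finite sequences of tagged literals, each justified by its
predecessors via the inference rules. -/
inductive IsDerivation (sep : Bool) (D : DTheory) : List TaggedLit → Prop
  | nil : IsDerivation sep D []
  | snoc (P : List TaggedLit) (c : TaggedLit) :
      IsDerivation sep D P → Step sep D {x | x ∈ P} c →
      IsDerivation sep D (P ++ [c])

/-- D ⊢ c : the tagged literal c occurs in some derivation in D. -/
def Proves (sep : Bool) (D : DTheory) (c : TaggedLit) : Prop :=
  ∃ P, IsDerivation sep D P ∧ c ∈ P

/-- A basic defeasible theory: no defeaters and an empty superiority relation. -/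
def DTheory.Basic (D : DTheory) : Prop :=
  (∀ r ∈ D.rules, r.kind ≠ RuleKind.defeater) ∧ (∀ r s : Rule, ¬ D.sup r s)

/-- D has duplicated strict rules: every strict rule has a defeasible copy. -/
def DTheory.DupStrictRules (D : DTheory) : Prop :=
  ∀ r ∈ D.rules, r.kind = RuleKind.strict →
    Rule.mk r.body r.head RuleKind.defeasible ∈ D.rules

/-- The literals of the (finite) language of D: all literals over atoms
occurring in D. -/
def DTheory.lits (D : DTheory) : Set Lit :=
  {l | (∃ f ∈ D.facts, f.atom = l.atom) ∨
       ∃ r ∈ D.rules, r.head.atom = l.atom ∨ ∃ a ∈ r.body, a.atom = l.atom}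

/-! ### Auxiliary machinery -/

/-- Monotonicity of `Step` in the set of preceding lines. -/
theorem Step.mono {sep : Bool} {D : DTheory} {S T : Set TaggedLit} {c : TaggedLit}
    (hST : S ⊆ T) (h : Step sep D S c) : Step sep D T c := by
  cases h with
  | plusDelta q h =>
    refine Step.plusDelta q ?_
    rcases h with h | ⟨r, hr, hb⟩
    · exact Or.inl h
    · exact Or.inr ⟨r, hr, fun a ha => hST (hb a ha)⟩
  | minusDelta q h1 h2 =>
    exact Step.minusDelta q h1 fun r hr => (h2 r hr).imp fun a ha => ⟨ha.1, hST ha.2⟩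
  | plusPartial q h =>
    refine Step.plusPartial q ?_
    rcases h with h | ⟨⟨r, hr, hb⟩, h2, h3⟩
    · exact Or.inl (hST h)
    · refine Or.inr ⟨⟨r, hr, fun a ha => hST (hb a ha)⟩, hST h2, fun s hs => ?_⟩
      rcases h3 s hs with ⟨a, ha, hma⟩ | ⟨t, ht, hsup, hb'⟩
      · exact Or.inl ⟨a, ha, hST hma⟩
      · exact Or.inr ⟨t, ht, hsup, fun a ha => hST (hb' a ha)⟩
  | minusPartial q h1 h2 =>
    refine Step.minusPartial q (hST h1) ?_
    rcases h2 with h | h | ⟨s, hs, hb, ht⟩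
    · exact Or.inl fun r hr => (h r hr).imp fun a ha => ⟨ha.1, hST ha.2⟩
    · exact Or.inr (Or.inl (hST h))
    · refine Or.inr (Or.inr ⟨s, hs, fun a ha => hST (hb a ha), fun t htt => ?_⟩)
      rcases ht t htt with ⟨a, ha, hma⟩ | hns
      · exact Or.inl ⟨a, ha, hST hma⟩
      · exact Or.inr hns
  | plusSigma q h =>
    obtain ⟨r, hr, hb⟩ := h
    exact Step.plusSigma q ⟨r, hr, fun a ha => hST (hb a ha)⟩
  | minusSigma q h =>
    exact Step.minusSigma q fun r hr => (h r hr).imp fun a ha => ⟨ha.1, hST ha.2⟩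

/-- A well-founded notion of derivability, equivalent to occurrence in a
finite derivation (in the direction we need). -/
inductive Derivable (sep : Bool) (D : DTheory) : TaggedLit → Prop
  | mk (S : Set TaggedLit) (c : TaggedLit)
      (hS : ∀ x ∈ S, Derivable sep D x) (h : Step sep D S c) :
      Derivable sep D c

theorem proves_derivable {sep : Bool} {D : DTheory} {c : TaggedLit}
    (h : Proves sep D c) : Derivable sep D c := by
  obtain ⟨P, hP, hc⟩ := h
  suffices H : ∀ x ∈ P, Derivable sep D x from H c hc
  clear hc
  induction hP with
  | nil => simp
  | snoc P c' hP hstep ih =>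
    intro x hx
    rw [List.mem_append] at hx
    rcases hx with hx | hx
    · exact ih x hx
    · simp only [List.mem_singleton] at hx
      subst hx
      exact Derivable.mk {y | y ∈ P} x ih hstep

/-- The opposite tag. -/
def TaggedLit.opp : TaggedLit → TaggedLit
  | .pDelta q => .mDelta q
  | .mDelta q => .pDelta q
  | .pPartial q => .mPartial q
  | .mPartial q => .pPartial q
  | .pSigma q => .mSigma q
  | .mSigma q => .pSigma q

/-- Coherence: no tagged literal is derivable together with its opposite. -/
theorem coherence {sep : Bool} {D : DTheory} :
    ∀ c : TaggedLit, Derivable sep D c → Derivable sep D c.opp → False := by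
  intro c h
  induction h with
  | mk S c hS hstep IH =>
    intro hop
    obtain ⟨S', _, hS', hstep'⟩ := hop
    cases hstep with
    | plusDelta l h1 =>
      cases hstep' with
      | minusDelta _ h2a h2b =>
        rcases h1 with hf | ⟨r, hr, hb⟩
        · exact h2a hf
        · obtain ⟨a, ha, hma⟩ := h2b r hr
          exact IH _ (hb a ha) (hS' _ hma)
    | minusDelta l h2a h2b =>
      cases hstep' with
      | plusDelta _ h1 =>
        rcases h1 with hf | ⟨r, hr, hb⟩
        · exact h2a hf
        · obtain ⟨a, ha, hma⟩ := h2b r hr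
          exact IH _ hma (hS' _ (hb a ha))
    | plusPartial l h1 =>
      cases hstep' with
      | minusPartial _ h2d h2 =>
        rcases h1 with hpd | ⟨⟨r, hr, hb⟩, h22, h23⟩
        · exact IH _ hpd (hS' _ h2d)
        · rcases h2 with hA | hB | ⟨s, hs, hsb, hts⟩
          · obtain ⟨a, ha, hma⟩ := hA r hr
            exact IH _ (hb a ha) (hS' _ hma)
          · exact IH _ h22 (hS' _ hB)
          · rcases h23 s hs with ⟨a, ha, hma⟩ | ⟨t, ht, hsup, htb⟩
            · exact IH _ hma (hS' _ (hsb a ha))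
            · rcases hts t ht with ⟨a, ha, hma'⟩ | hns
              · exact IH _ (htb a ha) (hS' _ hma')
              · exact hns hsup
    | minusPartial l h2d h2 =>
      cases hstep' with
      | plusPartial _ h1 =>
        rcases h1 with hpd | ⟨⟨r, hr, hb⟩, h22, h23⟩
        · exact IH _ h2d (hS' _ hpd)
        · rcases h2 with hA | hB | ⟨s, hs, hsb, hts⟩
          · obtain ⟨a, ha, hma⟩ := hA r hr
            exact IH _ hma (hS' _ (hb a ha))
          · exact IH _ hB (hS' _ h22)
          · rcases h23 s hs with ⟨a, ha, hma⟩ | ⟨t, ht, hsup, htb⟩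
            · exact IH _ (hsb a ha) (hS' _ hma)
            · rcases hts t ht with ⟨a, ha, hma'⟩ | hns
              · exact IH _ hma' (hS' _ (htb a ha))
              · exact hns hsup
    | plusSigma l h1 =>
      cases hstep' with
      | minusSigma _ h2 =>
        obtain ⟨r, hr, hb⟩ := h1
        obtain ⟨a, ha, hma⟩ := h2 r hr
        exact IH _ (hb a ha) (hS' _ hma)
    | minusSigma l h2 =>
      cases hstep' with
      | plusSigma _ h1 =>
        obtain ⟨r, hr, hb⟩ := h1
        obtain ⟨a, ha, hma⟩ := h2 r hr
        exact IH _ hma (hS' _ (hb a ha))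

/-- A step in the reduced theory is a step in the full theory, provided
`−∂q` is among the preceding lines. -/
theorem step_del_to_full (D : DTheory) (r : Rule) (q : Lit)
    (hk : r.kind = RuleKind.defeasible) (hq : q ∈ r.body) (hBasic : D.Basic)
    {S : Set TaggedLit} (hmq : TaggedLit.mPartial q ∈ S) {c : TaggedLit}
    (h : Step true ⟨D.facts, D.rules.erase r, D.sup, D.sup_acyclic⟩ S c) :
    Step true D S c := by
  set D' : DTheory := ⟨D.facts, D.rules.erase r, D.sup, D.sup_acyclic⟩ with hD'
  have hs_sub : ∀ (l : Lit), ∀ x ∈ D'.Rs l, x ∈ D.Rs l := by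
    rintro l x ⟨h1, h2, h3⟩
    exact ⟨Finset.mem_of_mem_erase h1, h2, h3⟩
  have hs_sup : ∀ (l : Lit), ∀ x ∈ D.Rs l, x ∈ D'.Rs l := by
    rintro l x ⟨h1, h2, h3⟩
    refine ⟨Finset.mem_erase.2 ⟨?_, h1⟩, h2, h3⟩
    rintro rfl
    exact RuleKind.noConfusion (hk.symm.trans h2)
  have hd_sub : ∀ (l : Lit), ∀ x ∈ D'.RD true l, x ∈ D.RD true l := by
    rintro l x ⟨h1, h2, h3⟩
    exact ⟨Finset.mem_of_mem_erase h1, h2, h3⟩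
  have hall_sub : ∀ (l : Lit), ∀ x ∈ D'.Rall l, x ∈ D.Rall l := by
    rintro l x ⟨h1, h2⟩
    exact ⟨Finset.mem_of_mem_erase h1, h2⟩
  cases h with
  | plusDelta l h1 =>
    refine Step.plusDelta l ?_
    rcases h1 with hf | ⟨rr, hrr, hb⟩
    · exact Or.inl hf
    · exact Or.inr ⟨rr, hs_sub l rr hrr, hb⟩
  | minusDelta l h1 h2 =>
    exact Step.minusDelta l h1 fun rr hrr => h2 rr (hs_sup l rr hrr)
  | plusPartial l h1 =>
    refine Step.plusPartial l ?_
    rcases h1 with hpd | ⟨⟨rr, hrr, hb⟩, h22, h23⟩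
    · exact Or.inl hpd
    · refine Or.inr ⟨⟨rr, hd_sub l rr hrr, hb⟩, h22, fun s hs => ?_⟩
      rcases eq_or_ne s r with rfl | hne
      · exact Or.inl ⟨q, hq, hmq⟩
      · have hs' : s ∈ D'.Rall l.compl := ⟨Finset.mem_erase.2 ⟨hne, hs.1⟩, hs.2⟩
        rcases h23 s hs' with ⟨a, ha, hma⟩ | ⟨t, ht, hsup, htb⟩
        · exact Or.inl ⟨a, ha, hma⟩
        · exact Or.inr ⟨t, hd_sub l t ht, hsup, htb⟩
  | minusPartial l h1 h2 =>
    refine Step.minusPartial l h1 ?_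
    rcases h2 with hA | hB | ⟨s, hs, hsb, hts⟩
    · refine Or.inl fun rr hrr => ?_
      rcases eq_or_ne rr r with rfl | hne
      · exact ⟨q, hq, hmq⟩
      · exact hA rr ⟨Finset.mem_erase.2 ⟨hne, hrr.1⟩, hrr.2.1, hrr.2.2⟩
    · exact Or.inr (Or.inl hB)
    · exact Or.inr (Or.inr ⟨s, hall_sub _ s hs, hsb,
        fun t _ => Or.inr (hBasic.2 t s)⟩)
  | plusSigma l h1 =>
    obtain ⟨rr, hrr, hb⟩ := h1
    exact Step.plusSigma l ⟨rr, hd_sub l rr hrr, hb⟩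
  | minusSigma l h2 =>
    refine Step.minusSigma l fun rr hrr => ?_
    rcases eq_or_ne rr r with rfl | hne
    · exact ⟨q, hq, hmq⟩
    · exact h2 rr ⟨Finset.mem_erase.2 ⟨hne, hrr.1⟩, hrr.2.1, hrr.2.2⟩

/-- A step in the full theory is a step in the reduced theory, provided
`+∂q` is NOT among the preceding lines. -/
theorem step_full_to_del (D : DTheory) (r : Rule) (q : Lit)
    (hk : r.kind = RuleKind.defeasible) (hq : q ∈ r.body) (hBasic : D.Basic)
    {S : Set TaggedLit} (hnq : TaggedLit.pPartial q ∉ S) {c : TaggedLit}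
    (h : Step true D S c) :
    Step true ⟨D.facts, D.rules.erase r, D.sup, D.sup_acyclic⟩ S c := by
  set D' : DTheory := ⟨D.facts, D.rules.erase r, D.sup, D.sup_acyclic⟩ with hD'
  cases h with
  | plusDelta l h1 =>
    refine Step.plusDelta l ?_
    rcases h1 with hf | ⟨rr, hrr, hb⟩
    · exact Or.inl hf
    · refine Or.inr ⟨rr, ⟨Finset.mem_erase.2 ⟨?_, hrr.1⟩, hrr.2.1, hrr.2.2⟩, hb⟩
      rintro rfl
      exact RuleKind.noConfusion (hk.symm.trans hrr.2.1)
  | minusDelta l h1 h2 =>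
    exact Step.minusDelta l h1 fun rr hrr =>
      h2 rr ⟨Finset.mem_of_mem_erase hrr.1, hrr.2⟩
  | plusPartial l h1 =>
    refine Step.plusPartial l ?_
    rcases h1 with hpd | ⟨⟨rr, hrr, hb⟩, h22, h23⟩
    · exact Or.inl hpd
    · have hne : rr ≠ r := by
        rintro rfl
        exact hnq (hb q hq)
      refine Or.inr ⟨⟨rr, ⟨Finset.mem_erase.2 ⟨hne, hrr.1⟩, hrr.2.1, hrr.2.2⟩, hb⟩,
        h22, fun s hs => ?_⟩
      have hs' : s ∈ D.Rall l.compl := ⟨Finset.mem_of_mem_erase hs.1, hs.2⟩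
      rcases h23 s hs' with ⟨a, ha, hma⟩ | ⟨t, ht, hsup, htb⟩
      · exact Or.inl ⟨a, ha, hma⟩
      · exact absurd hsup (hBasic.2 t s)
  | minusPartial l h1 h2 =>
    refine Step.minusPartial l h1 ?_
    rcases h2 with hA | hB | ⟨s, hs, hsb, hts⟩
    · exact Or.inl fun rr hrr =>
        hA rr ⟨Finset.mem_of_mem_erase hrr.1, hrr.2⟩
    · exact Or.inr (Or.inl hB)
    · have hne : s ≠ r := by
        rintro rfl
        exact hnq (hsb q hq)
      exact Or.inr (Or.inr ⟨s, ⟨Finset.mem_erase.2 ⟨hne, hs.1⟩, hs.2⟩, hsb,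
        fun t _ => Or.inr (hBasic.2 t s)⟩)
  | plusSigma l h1 =>
    obtain ⟨rr, hrr, hb⟩ := h1
    have hne : rr ≠ r := by
      rintro rfl
      exact hnq (hb q hq)
    exact Step.plusSigma l ⟨rr, ⟨Finset.mem_erase.2 ⟨hne, hrr.1⟩, hrr.2.1, hrr.2.2⟩, hb⟩
  | minusSigma l h2 =>
    exact Step.minusSigma l fun rr hrr =>
      h2 rr ⟨Finset.mem_of_mem_erase hrr.1, hrr.2⟩

/-- deleting a defeasible rule r whose body contains a
defeasibly-unprovable literal q from a basic defeasible theory D (separated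
reasoning) preserves all consequences (including extended conclusions). -/
theorem delete_rule_defeasible (D : DTheory) (r : Rule) (q : Lit)
    (hBasic : D.Basic) (hr : r ∈ D.rules) (hk : r.kind = RuleKind.defeasible)
    (hq : q ∈ r.body)
    (hprov : Proves true D (TaggedLit.mPartial q)) :
    ∀ c : TaggedLit,
      Proves true D c ↔
      Proves true ⟨D.facts, D.rules.erase r, D.sup, D.sup_acyclic⟩ c := by
  have hnot : ¬ Proves true D (TaggedLit.pPartial q) := fun hp =>
    coherence (TaggedLit.pPartial q) (proves_derivable hp) (proves_derivable hprov)
  have key1 : ∀ P, IsDerivation true D P → TaggedLit.pPartial q ∉ P →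
      IsDerivation true ⟨D.facts, D.rules.erase r, D.sup, D.sup_acyclic⟩ P := by
    intro P hP
    induction hP with
    | nil => intro _; exact IsDerivation.nil
    | snoc P c' hP hstep ih =>
      intro hn
      have hnP : TaggedLit.pPartial q ∉ P := fun h => hn (List.mem_append_left _ h)
      exact IsDerivation.snoc P c' (ih hnP)
        (step_full_to_del D r q hk hq hBasic hnP hstep)
  intro c
  constructor
  · rintro ⟨P, hP, hc⟩
    have hnP : TaggedLit.pPartial q ∉ P := fun hmem => hnot ⟨P, hP, hmem⟩
    exact ⟨P, key1 P hP hnP, hc⟩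
  · rintro ⟨P', hP', hc⟩
    obtain ⟨P0, hP0, hq0⟩ := hprov
    have key2 : ∀ P'', IsDerivation true ⟨D.facts, D.rules.erase r, D.sup, D.sup_acyclic⟩ P'' →
        IsDerivation true D (P0 ++ P'') := by
      intro P'' hP''
      induction hP'' with
      | nil => simpa using hP0
      | snoc P c' hP hstep ih =>
        rw [← List.append_assoc]
        refine IsDerivation.snoc _ c' ih ?_
        have hmono : Step true ⟨D.facts, D.rules.erase r, D.sup, D.sup_acyclic⟩
            {x | x ∈ P0 ++ P} c' :=
          hstep.mono (fun x hx => List.mem_append_right _ hx)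
        exact step_del_to_full D r q hk hq hBasic (List.mem_append_left _ hq0) hmono
    exact ⟨P0 ++ P', key2 P' hP', List.mem_append_right _ hc⟩
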